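/- Let G be a hypoenergetic graph of order p and let m ≥ 1. Then the m-shadow graph D_m(G) is hypoenergetic, i.e., ε(D_m(G)) < mp. -/

import Mathlib

open Matrix SimpleGraph Finset

variable {V W : Type*}

/-- The adjacency matrix of a simple graph over ℝ is Hermitian. -/
lemma adjMatrix_isHermitian [Fintype V] [DecidableEq V] (G : SimpleGraph V)
    [DecidableRel G.Adj] : (G.adjMatrix ℝ).IsHermitian := by
  rw [Matrix.IsHermitian, Matrix.conjTranspose_eq_transpose_of_trivial]
  exact G.isSymm_adjMatrix

/-- The energy of a finite simple graph: the sum of the absolute values of the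
eigenvalues of its real adjacency matrix. -/
noncomputable def graphEnergy [Fintype V] [DecidableEq V] (G : SimpleGraph V) : ℝ := by
  classical
  exact ∑ i, |(adjMatrix_isHermitian G).eigenvalues i|

/-- The spectrum of a finite simple graph: the multiset of eigenvalues (with
multiplicity) of its real adjacency matrix. -/
noncomputable def graphSpectrum [Fintype V] [DecidableEq V] (G : SimpleGraph V) : Multiset ℝ := by
  classical
  exact Finset.univ.val.map (adjMatrix_isHermitian G).eigenvalues

/-- A graph is integral if every eigenvalue of its adjacency matrix is an integer. -/
def IsIntegralGraph [Fintype V] [DecidableEq V] (G : SimpleGraph V) : Prop :=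
  ∀ x ∈ graphSpectrum G, ∃ k : ℤ, x = (k : ℝ)

/-- The m-shadow graph of `G`, on vertex set `Fin m × V`: `(i,u)` and `(j,v)` are
adjacent iff `u` and `v` are adjacent in `G`. -/
def shadowGraph (m : ℕ) (G : SimpleGraph V) : SimpleGraph (Fin m × V) where
  Adj x y := G.Adj x.2 y.2
  symm := ⟨fun _ _ h => h.symm⟩
  loopless := ⟨fun _ h => G.loopless.irrefl _ h⟩

/-- The duplicate graph of `G`, on vertex set `V ⊕ V`: `inl a` is adjacent to
`inr b` iff `a` and `b` are adjacent in `G`; no other adjacencies. -/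
def duplicateGraph (G : SimpleGraph V) : SimpleGraph (V ⊕ V) where
  Adj x y :=
    match x, y with
    | Sum.inl a, Sum.inr b => G.Adj a b
    | Sum.inr a, Sum.inl b => G.Adj a b
    | _, _ => False
  symm := ⟨by rintro (a | a) (b | b) h <;> first | exact h.symm | exact h.elim⟩
  loopless := ⟨by rintro (a | a) h <;> exact h⟩

/-- The Kronecker (tensor) product of two simple graphs. -/
def tensorGraph (G : SimpleGraph V) (H : SimpleGraph W) : SimpleGraph (V × W) where
  Adj x y := G.Adj x.1 y.1 ∧ H.Adj x.2 y.2
  symm := ⟨fun _ _ h => ⟨h.1.symm, h.2.symm⟩⟩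
  loopless := ⟨fun _ h => G.loopless.irrefl _ h.1⟩

/-- The m-splitting graph of `G`, on vertex set `V ⊕ (Fin m × V)`: original
vertices keep their adjacencies, an original vertex `u` is adjacent to a copy
`(i,v)` iff `u` is adjacent to `v` in `G`, and copies are pairwise non-adjacent. -/
def splittingGraph (m : ℕ) (G : SimpleGraph V) : SimpleGraph (V ⊕ (Fin m × V)) where
  Adj x y :=
    match x, y with
    | Sum.inl u, Sum.inl v => G.Adj u v
    | Sum.inl u, Sum.inr iv => G.Adj u iv.2
    | Sum.inr iu, Sum.inl v => G.Adj iu.2 v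
    | Sum.inr _, Sum.inr _ => False
  symm := ⟨by rintro (u | iu) (v | iv) h <;> first | exact h.symm | exact h.elim⟩
  loopless := ⟨by rintro (u | iu) h <;> first | exact G.loopless.irrefl _ h | exact h⟩

/-- The join of two simple graphs: their disjoint union together with all edges
between the two parts. -/
def joinGraph (G : SimpleGraph V) (H : SimpleGraph W) : SimpleGraph (V ⊕ W) where
  Adj x y :=
    match x, y with
    | Sum.inl a, Sum.inl b => G.Adj a b
    | Sum.inr a, Sum.inr b => H.Adj a b
    | _, _ => True
  symm := ⟨by rintro (a | a) (b | b) h <;> first | exact h.symm | trivial⟩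
  loopless := ⟨by rintro (a | a) h <;> first | exact G.loopless.irrefl _ h | exact H.loopless.irrefl _ h⟩

/-- The superpath graph on a sequence of part sizes: independent sets `W i` of
size `a i`, where vertices in parts `i` and `j` are adjacent iff `|i - j| = 1`. -/
def superpathGraph {t : ℕ} (a : Fin t → ℕ) : SimpleGraph (Σ i : Fin t, Fin (a i)) where
  Adj x y := (x.1 : ℕ) + 1 = (y.1 : ℕ) ∨ (y.1 : ℕ) + 1 = (x.1 : ℕ)
  symm := ⟨fun _ _ h => h.symm⟩
  loopless := ⟨fun x h => by omega⟩


/-! The energy of a Hermitian matrix `A` is the trace of its absolute value `|A| = √(A⋆A)`.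
For positive semidefinite `P`, the matrix `P ⊗ |A|` is positive semidefinite and squares to
`(P ⊗ A)⋆(P ⊗ A)`, so `|P ⊗ A| = P ⊗ |A|` and the energy of `P ⊗ A` is `tr P` times that of `A`.
The adjacency matrix of `D_m(G)` is `J_m ⊗ A(G)`, hence `ε(D_m(G)) = m ε(G) < m p`. -/

open scoped Kronecker MatrixOrder ComplexOrder

namespace Matrix

variable {𝕜 n k : Type*} [RCLike 𝕜] [Fintype n] [DecidableEq n] [Fintype k] [DecidableEq k]

lemma IsHermitian.trace_cfc {A : Matrix n n 𝕜} (hA : A.IsHermitian) (f : ℝ → ℝ) :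
    (cfc f A).trace = ∑ i, (f (hA.eigenvalues i) : 𝕜) := by
  rw [hA.cfc_eq, IsHermitian.cfc, Unitary.conjStarAlgAut_apply, trace_mul_cycle,
    Unitary.coe_star_mul_self, one_mul, trace_diagonal]
  rfl

lemma IsHermitian.trace_abs {A : Matrix n n 𝕜} (hA : A.IsHermitian) :
    (CFC.abs A).trace = ∑ i, ((|hA.eigenvalues i| : ℝ) : 𝕜) := by
  rw [CFC.abs_eq_cfc_norm A hA.isSelfAdjoint, hA.trace_cfc]
  rfl

lemma PosSemidef.abs_kronecker {P : Matrix k k 𝕜} (hP : P.PosSemidef) (A : Matrix n n 𝕜) :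
    CFC.abs (P ⊗ₖ A) = P ⊗ₖ CFC.abs A := by
  refine CFC.sqrt_unique ?_ (hP.kronecker (CFC.abs_nonneg A).posSemidef).nonneg
  rw [← mul_kronecker_mul, CFC.abs_mul_abs, star_eq_conjTranspose, star_eq_conjTranspose,
    conjTranspose_kronecker, mul_kronecker_mul, hP.isHermitian.eq]

lemma PosSemidef.sum_abs_eigenvalues_kronecker {P : Matrix k k ℝ} (hP : P.PosSemidef)
    {A : Matrix n n ℝ} (hA : A.IsHermitian) {B : Matrix (k × n) (k × n) ℝ} (hB : B.IsHermitian)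
    (hBPA : B = P ⊗ₖ A) :
    ∑ i, |hB.eigenvalues i| = P.trace * ∑ i, |hA.eigenvalues i| := by
  subst hBPA
  have h := hB.trace_abs
  rw [hP.abs_kronecker, trace_kronecker, hA.trace_abs] at h
  simpa using h.symm

lemma posSemidef_of_const_one (ι : Type*) [Fintype ι] :
    (of fun _ _ => 1 : Matrix ι ι 𝕜).PosSemidef := by
  simpa [vecMulVec] using posSemidef_vecMulVec_self_star (1 : ι → 𝕜)

end Matrix

lemma SimpleGraph.adjMatrix_shadowGraph {R : Type*} [NonAssocSemiring R] (m : ℕ)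
    (G : SimpleGraph V) [DecidableRel G.Adj] [DecidableRel (shadowGraph m G).Adj] :
    (shadowGraph m G).adjMatrix R = of (fun _ _ => 1) ⊗ₖ G.adjMatrix R := by
  ext ⟨i, u⟩ ⟨j, v⟩
  simp only [adjMatrix_apply, kroneckerMap_apply, of_apply, one_mul]
  exact if_congr Iff.rfl rfl rfl

lemma graphEnergy_shadowGraph [Fintype V] [DecidableEq V] (m : ℕ) (G : SimpleGraph V) :
    graphEnergy (shadowGraph m G) = m * graphEnergy G := by
  classical
  unfold graphEnergy
  simpa [trace] using (posSemidef_of_const_one (Fin m)).sum_abs_eigenvalues_kronecker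
    (adjMatrix_isHermitian G) (adjMatrix_isHermitian _) (adjMatrix_shadowGraph m G)

theorem shadowGraph_hypoenergetic_general [Fintype V] [DecidableEq V]
    (G : SimpleGraph V) (p m : ℕ)
    (hyp : graphEnergy G < p) (hm : 1 ≤ m) :
    graphEnergy (shadowGraph m G) < (m : ℝ) * p := by
  rw [graphEnergy_shadowGraph]
  exact mul_lt_mul_of_pos_left hyp (by exact_mod_cast hm)

/-- If `G` is a hypoenergetic graph of order `p` and `m ≥ 1`, then the m-shadow
graph `D_m(G)` is hypoenergetic: its energy is less than its order `m * p`. -/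
theorem shadowGraph_hypoenergetic [Fintype V] [DecidableEq V]
    (G : SimpleGraph V) (p m : ℕ) (hp : Fintype.card V = p)
    (hyp : graphEnergy G < p) (hm : 1 ≤ m) :
    graphEnergy (shadowGraph m G) < (m : ℝ) * p :=
  shadowGraph_hypoenergetic_general G p m hyp hm
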